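/- arXiv:1004.0650 — 2 statements merged into one kernel-verified Lean document; each statement's English description precedes it below -/
import Mathlib

section
/- If h ≥ 0 and ρ := −log(1 − √(1 − e^{−2h})) (with ρ = 0 when h = 0), then ρ ≤ √(2h) + 2h. -/
/-!
Put `x = √(1 - e^{-2h})`. Since `(1 - x)(1 + x) = e^{-2h}`, we get
`-log (1 - x) = 2h + log (1 + x) ≤ 2h + x`, and `x ≤ √(2h)` because `1 - e^{-2h} ≤ 2h`.
-/

open Real

lemma neg_log_one_sub_le_neg_log_one_sub_sq_add {x : ℝ} (hx₀ : 0 ≤ x) (hx₁ : x < 1) :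
    -log (1 - x) ≤ -log (1 - x ^ 2) + x := by
  have hfactor : log (1 - x ^ 2) = log (1 - x) + log (1 + x) := by
    rw [← log_mul (by linarith) (by linarith)]
    ring_nf
  have hlog : log (1 + x) ≤ x := by
    linarith [log_le_sub_one_of_pos (x := 1 + x) (by linarith)]
  linarith

lemma sqrt_one_sub_exp_neg_le_sqrt (t : ℝ) : √(1 - exp (-t)) ≤ √t :=
  sqrt_le_sqrt (by linarith [one_sub_le_exp_neg t])

lemma neg_log_one_sub_sqrt_one_sub_exp_neg_le {t : ℝ} (ht : 0 ≤ t) :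
    -log (1 - √(1 - exp (-t))) ≤ √t + t := by
  set x := √(1 - exp (-t))
  have hexp_le : exp (-t) ≤ 1 := exp_le_one_iff.mpr (by linarith)
  have hx_sq : x ^ 2 = 1 - exp (-t) := sq_sqrt (by linarith)
  have hx₁ : x < 1 := by
    nlinarith [exp_pos (-t), sqrt_nonneg (1 - exp (-t))]
  calc -log (1 - x) ≤ -log (1 - x ^ 2) + x :=
        neg_log_one_sub_le_neg_log_one_sub_sq_add (sqrt_nonneg _) hx₁
    _ = t + x := by rw [hx_sq, sub_sub_cancel, log_exp, neg_neg]
    _ ≤ √t + t := by linarith [sqrt_one_sub_exp_neg_le_sqrt t]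

theorem stmt_6 (h : ℝ) (hh : 0 ≤ h) :
    -Real.log (1 - Real.sqrt (1 - Real.exp (-2 * h))) ≤ Real.sqrt (2 * h) + 2 * h := by
  rw [neg_mul]
  exact neg_log_one_sub_sqrt_one_sub_exp_neg_le (by linarith)
end

section
/- Suppose (r_ℓ)_{ℓ≥1} are nonnegative reals with r_ℓ → 0 as ℓ → ∞, and (b_ℓ)_{ℓ≥1} are positive integers with Σ_{ℓ=1}^∞ b_ℓ e^{−r_1−⋯−r_{ℓ−1}} = ∞. Then the infimum over M ≥ 1 of δ̄((r_ℓ)_{ℓ=1}^M, (b_ℓ)_{ℓ=1}^M) = (1 + Σ_{ℓ=1}^M b_ℓ e^{−r_1−⋯−r_{ℓ−1}}(1 − e^{−r_ℓ})) / (Σ_{ℓ=1}^M b_ℓ e^{−r_1−⋯−r_{ℓ−1}}) is zero. -/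
/-!
Write `w ℓ = b ℓ e^{-r_1-⋯-r_{ℓ-1}}` and `c ℓ = 1 - e^{-r ℓ}`, so that the quotient at `M` is
`1 / W M + (∑ w c) / W M` with `W M = ∑_{ℓ ≤ M} w ℓ → ∞`. The first term tends to `0`, and the
second is a weighted average of `c`, which tends to `0` with `r`. All quotients are nonnegative
because `r ≥ 0`, so their infimum is their limit `0`.
-/

open Filter Topology

lemma abs_sum_mul_le_of_abs_le {w c : ℕ → ℝ} (hw : ∀ ℓ, 0 ≤ w ℓ) {ε : ℝ} {L : ℕ}
    (hc : ∀ ℓ, L ≤ ℓ → |c ℓ| ≤ ε) (s : Finset ℕ) :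
    |∑ ℓ ∈ s, w ℓ * c ℓ| ≤ ∑ ℓ ∈ Finset.range L, w ℓ * |c ℓ| + ε * ∑ ℓ ∈ s, w ℓ := by
  have hterm : ∀ ℓ ∈ s, w ℓ * |c ℓ| ≤
      (if ℓ < L then w ℓ * |c ℓ| else 0) + ε * w ℓ := by
    intro ℓ _
    split_ifs with hℓ
    · nlinarith [hw ℓ, abs_nonneg (c ℓ), (abs_nonneg (c L)).trans (hc L le_rfl)]
    · have := hc ℓ (not_lt.mp hℓ)
      nlinarith [hw ℓ]
  have hhead : ∑ ℓ ∈ s, (if ℓ < L then w ℓ * |c ℓ| else 0) ≤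
      ∑ ℓ ∈ Finset.range L, w ℓ * |c ℓ| := by
    rw [← Finset.sum_filter]
    refine Finset.sum_le_sum_of_subset_of_nonneg (fun ℓ hℓ => ?_) fun ℓ _ _ => ?_
    · simpa using (Finset.mem_filter.mp hℓ).2
    · exact mul_nonneg (hw ℓ) (abs_nonneg _)
  calc |∑ ℓ ∈ s, w ℓ * c ℓ| ≤ ∑ ℓ ∈ s, w ℓ * |c ℓ| := by
        refine (Finset.abs_sum_le_sum_abs _ _).trans_eq (Finset.sum_congr rfl fun ℓ _ => ?_)
        rw [abs_mul, abs_of_nonneg (hw ℓ)]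
    _ ≤ ∑ ℓ ∈ s, ((if ℓ < L then w ℓ * |c ℓ| else 0) + ε * w ℓ) := Finset.sum_le_sum hterm
    _ ≤ _ := by
        rw [Finset.sum_add_distrib, ← Finset.mul_sum]
        exact add_le_add_left hhead _

theorem tendsto_sum_mul_div_sum_of_tendsto_zero {α : Type*} {l : Filter α} {w c : ℕ → ℝ}
    (hw : ∀ ℓ, 0 ≤ w ℓ) (hc : Tendsto c atTop (𝓝 0)) (s : α → Finset ℕ)
    (hW : Tendsto (fun M => ∑ ℓ ∈ s M, w ℓ) l atTop) :
    Tendsto (fun M => (∑ ℓ ∈ s M, w ℓ * c ℓ) / ∑ ℓ ∈ s M, w ℓ) l (𝓝 0) := by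
  rw [Metric.tendsto_nhds]
  intro ε hε
  obtain ⟨L, hL⟩ := eventually_atTop.mp
    (Metric.tendsto_nhds.mp hc (ε / 2) (half_pos hε))
  have hcL : ∀ ℓ, L ≤ ℓ → |c ℓ| ≤ ε / 2 := fun ℓ hℓ => by
    simpa [Real.dist_eq] using (hL ℓ hℓ).le
  set K := ∑ ℓ ∈ Finset.range L, w ℓ * |c ℓ|
  filter_upwards [hW.eventually_gt_atTop (2 * K / ε)] with M hM
  have hK : 0 ≤ K := Finset.sum_nonneg fun ℓ _ => mul_nonneg (hw ℓ) (abs_nonneg _)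
  have hWpos : 0 < ∑ ℓ ∈ s M, w ℓ := lt_of_le_of_lt (by positivity) hM
  have hKW : K < ε / 2 * ∑ ℓ ∈ s M, w ℓ := by
    rw [div_lt_iff₀ hε] at hM
    linarith
  rw [Real.dist_eq, sub_zero, abs_div, abs_of_pos hWpos, div_lt_iff₀ hWpos]
  linarith [abs_sum_mul_le_of_abs_le hw hcL (s M)]

lemma tendsto_one_sub_exp_neg_zero {r : ℕ → ℝ} (hr0 : Tendsto r atTop (𝓝 0)) :
    Tendsto (fun ℓ => 1 - Real.exp (-r ℓ)) atTop (𝓝 0) := by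
  simpa using (tendsto_const_nhds (x := (1 : ℝ))).sub ((Real.continuous_exp.tendsto 0).comp (by simpa using hr0.neg))

lemma one_sub_exp_neg_nonneg {x : ℝ} (hx : 0 ≤ x) : 0 ≤ 1 - Real.exp (-x) :=
  sub_nonneg.mpr (Real.exp_le_one_iff.mpr (neg_nonpos.mpr hx))

lemma csInf_eq_of_tendsto {α : Type*} {l : Filter α} [l.NeBot] {S : Set ℝ} {a : ℝ}
    (hS : ∀ x ∈ S, a ≤ x) {x : α → ℝ} (hx : Tendsto x l (𝓝 a)) (hxS : ∀ᶠ M in l, x M ∈ S) :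
    sInf S = a :=
  (isGLB_of_mem_closure hS (mem_closure_of_tendsto hx hxS)).csInf_eq
    (let ⟨M, hM⟩ := hxS.exists; ⟨x M, hM⟩)

theorem stmt_9_general (r : ℕ → ℝ) (b : ℕ → ℕ)
    (hr : ∀ ℓ, 0 ≤ r ℓ) (hr0 : Tendsto r atTop (𝓝 0))
    (hdiv : Tendsto
      (fun M => ∑ ℓ ∈ Finset.Icc 1 M,
        (b ℓ : ℝ) * Real.exp (-(∑ k ∈ Finset.Icc 1 (ℓ - 1), r k))) atTop atTop) :
    sInf {x : ℝ | ∃ M : ℕ, 1 ≤ M ∧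
      x = (1 + ∑ ℓ ∈ Finset.Icc 1 M,
              (b ℓ : ℝ) * Real.exp (-(∑ k ∈ Finset.Icc 1 (ℓ - 1), r k)) *
                (1 - Real.exp (-r ℓ))) /
            (∑ ℓ ∈ Finset.Icc 1 M,
              (b ℓ : ℝ) * Real.exp (-(∑ k ∈ Finset.Icc 1 (ℓ - 1), r k)))} = 0 := by
  set w : ℕ → ℝ := fun ℓ => (b ℓ : ℝ) * Real.exp (-(∑ k ∈ Finset.Icc 1 (ℓ - 1), r k))
  have hw : ∀ ℓ, 0 ≤ w ℓ := fun ℓ => by positivity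
  have hlim : Tendsto (fun M => (1 + ∑ ℓ ∈ Finset.Icc 1 M, w ℓ * (1 - Real.exp (-r ℓ))) /
      ∑ ℓ ∈ Finset.Icc 1 M, w ℓ) atTop (𝓝 0) := by
    simp_rw [add_div]
    simpa using (tendsto_inv_atTop_zero.comp hdiv).add
      (tendsto_sum_mul_div_sum_of_tendsto_zero hw (tendsto_one_sub_exp_neg_zero hr0) _ hdiv)
  refine csInf_eq_of_tendsto ?_ hlim ((eventually_ge_atTop 1).mono fun M hM => ⟨M, hM, rfl⟩)
  rintro _ ⟨M, -, rfl⟩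
  have hc : ∀ ℓ, 0 ≤ w ℓ * (1 - Real.exp (-r ℓ)) :=
    fun ℓ => mul_nonneg (hw ℓ) (one_sub_exp_neg_nonneg (hr ℓ))
  exact div_nonneg (add_nonneg zero_le_one (Finset.sum_nonneg fun ℓ _ => hc ℓ))
    (Finset.sum_nonneg fun ℓ _ => hw ℓ)

theorem stmt_9 (r : ℕ → ℝ) (b : ℕ → ℕ)
    (hr : ∀ ℓ, 0 ≤ r ℓ) (hr0 : Tendsto r atTop (𝓝 0)) (hb : ∀ ℓ, 0 < b ℓ)
    (hdiv : Tendsto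
      (fun M => ∑ ℓ ∈ Finset.Icc 1 M,
        (b ℓ : ℝ) * Real.exp (-(∑ k ∈ Finset.Icc 1 (ℓ - 1), r k))) atTop atTop) :
    sInf {x : ℝ | ∃ M : ℕ, 1 ≤ M ∧
      x = (1 + ∑ ℓ ∈ Finset.Icc 1 M,
              (b ℓ : ℝ) * Real.exp (-(∑ k ∈ Finset.Icc 1 (ℓ - 1), r k)) *
                (1 - Real.exp (-r ℓ))) /
            (∑ ℓ ∈ Finset.Icc 1 M,
              (b ℓ : ℝ) * Real.exp (-(∑ k ∈ Finset.Icc 1 (ℓ - 1), r k)))} = 0 :=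
  stmt_9_general r b hr hr0 hdiv
end
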